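/- arXiv:1609.04559 — 5 statements merged into one kernel-verified Lean document; each statement's English description precedes it below -/
import Mathlib

section
/- Let λ ≥ 0, let c : ℝ → (0,∞) be continuous, and let Φ_c(x) = ∫₀^x dw/c(w). Suppose q : ℝ × (0,∞) → ℝ is twice continuously differentiable and satisfies the classical telegraph equation ∂²q/∂t² + 2λ ∂q/∂t = ∂²q/∂y². Then the function p(x,t) = q(Φ_c(x), t) satisfies the telegraph equation with space-varying velocity: ∂²p/∂t² + 2λ ∂p/∂t = c(x) ∂/∂x( c(x) ∂p/∂x ) for all x ∈ ℝ and t > 0. -/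
open Real MeasureTheory

/-- `Φ_c x = ∫₀ˣ dw / c(w)`. -/
noncomputable def Phi (c : ℝ → ℝ) (x : ℝ) : ℝ := ∫ w in (0:ℝ)..x, (c w)⁻¹

/-!
Since `Φ_c' = 1 / c`, the operator `c ∂ₓ` acting on `f ∘ Φ_c` is `f' ∘ Φ_c`; applying this twice
turns `c ∂ₓ (c ∂ₓ p)` into `(∂²_y q) ∘ Φ_c`, while the time derivatives of `p(x, ·) = q(Φ_c x, ·)`
are those of `q`.
-/

theorem hasDerivAt_Phi {c : ℝ → ℝ} (hc : Continuous c) (hc0 : ∀ x, c x ≠ 0) (x : ℝ) :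
    HasDerivAt (Phi c) (c x)⁻¹ x :=
  ((hc.inv₀ hc0).integral_hasStrictDerivAt 0 x).hasDerivAt

theorem mul_deriv_comp_Phi {c f : ℝ → ℝ} (hc : Continuous c) (hc0 : ∀ x, c x ≠ 0) {x : ℝ}
    (hf : DifferentiableAt ℝ f (Phi c x)) :
    c x * deriv (fun y => f (Phi c y)) x = deriv f (Phi c x) := by
  have hderiv : deriv (fun y => f (Phi c y)) x = deriv f (Phi c x) * (c x)⁻¹ :=
    (hf.hasDerivAt.comp x (hasDerivAt_Phi hc hc0 x)).deriv
  rw [hderiv, mul_left_comm, mul_inv_cancel₀ (hc0 x), mul_one]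

theorem mul_deriv_mul_deriv_comp_Phi {c f : ℝ → ℝ} (hc : Continuous c) (hc0 : ∀ x, c x ≠ 0)
    (hf : ContDiff ℝ 2 f) (x : ℝ) :
    c x * deriv (fun y => c y * deriv (fun z => f (Phi c z)) y) x
      = iteratedDeriv 2 f (Phi c x) := by
  have hf' : Differentiable ℝ (deriv f) := by
    simpa only [iteratedDeriv_one] using hf.differentiable_iteratedDeriv 1 (by norm_num)
  simp only [mul_deriv_comp_Phi hc hc0 (hf.differentiable two_ne_zero _)]
  rw [mul_deriv_comp_Phi hc hc0 (hf' _), iteratedDeriv_succ, iteratedDeriv_one]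

theorem ContDiffOn.contDiff_slice {𝕜 E F G : Type*} [NontriviallyNormedField 𝕜]
    [NormedAddCommGroup E] [NormedSpace 𝕜 E] [NormedAddCommGroup F] [NormedSpace 𝕜 F]
    [NormedAddCommGroup G] [NormedSpace 𝕜 G] {n : WithTop ℕ∞} {q : E → F → G} {s : Set F}
    (hq : ContDiffOn 𝕜 n (fun z : E × F => q z.1 z.2) (Set.univ ×ˢ s)) {t : F} (ht : t ∈ s) :
    ContDiff 𝕜 n (fun y => q y t) := by
  rw [← contDiffOn_univ]
  exact hq.comp (contDiff_id.prodMk contDiff_const).contDiffOn fun _ _ => ⟨trivial, ht⟩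

theorem telegraph_space_varying_velocity_from_classical_general
    (lam : ℝ)
    (c : ℝ → ℝ) (hc : Continuous c) (hcpos : ∀ x, 0 < c x)
    (q : ℝ → ℝ → ℝ)
    (hq : ContDiffOn ℝ 2 (fun z : ℝ × ℝ => q z.1 z.2) (Set.univ ×ˢ Set.Ioi (0:ℝ)))
    (heq : ∀ y : ℝ, ∀ t : ℝ, 0 < t →
      iteratedDeriv 2 (fun s => q y s) t + 2 * lam * deriv (fun s => q y s) t
        = iteratedDeriv 2 (fun z => q z t) y)
    (p : ℝ → ℝ → ℝ)
    (hp : ∀ x, ∀ t : ℝ, p x t = q (Phi c x) t) :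
    ∀ x : ℝ, ∀ t : ℝ, 0 < t →
      iteratedDeriv 2 (fun s => p x s) t + 2 * lam * deriv (fun s => p x s) t
        = c x * deriv (fun y => c y * deriv (fun z => p z t) y) x := by
  intro x t ht
  have hc0 : ∀ x, c x ≠ 0 := fun x => (hcpos x).ne'
  simp only [hp]
  rw [heq _ t ht, mul_deriv_mul_deriv_comp_Phi hc hc0 (hq.contDiff_slice (Set.mem_Ioi.2 ht))]

theorem telegraph_space_varying_velocity_from_classical
    (lam : ℝ) (hlam : 0 ≤ lam)
    (c : ℝ → ℝ) (hc : Continuous c) (hcpos : ∀ x, 0 < c x)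
    (q : ℝ → ℝ → ℝ)
    (hq : ContDiffOn ℝ 2 (fun z : ℝ × ℝ => q z.1 z.2) (Set.univ ×ˢ Set.Ioi (0:ℝ)))
    (heq : ∀ y : ℝ, ∀ t : ℝ, 0 < t →
      iteratedDeriv 2 (fun s => q y s) t + 2 * lam * deriv (fun s => q y s) t
        = iteratedDeriv 2 (fun z => q z t) y)
    (p : ℝ → ℝ → ℝ)
    (hp : ∀ x, ∀ t : ℝ, p x t = q (Phi c x) t) :
    ∀ x : ℝ, ∀ t : ℝ, 0 < t →
      iteratedDeriv 2 (fun s => p x s) t + 2 * lam * deriv (fun s => p x s) t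
        = c x * deriv (fun y => c y * deriv (fun z => p z t) y) x :=
  telegraph_space_varying_velocity_from_classical_general lam c hc hcpos q hq heq p hp
end

section
/- Let λ > 0 and c > 0. The absolutely continuous component of the telegraph process law, namely the function p(x,t) = (e^{−λt}/2)[ λ I₀( (λ/c)√(c²t² − x²) ) + ∂/∂t I₀( (λ/c)√(c²t² − x²) ) ], satisfies the telegraph equation ∂²p/∂t² + 2λ ∂p/∂t = c² ∂²p/∂x² for all (x,t) with t > 0 and |x| < ct. -/
open Real MeasureTheory

/-- Modified Bessel function of order zero, `I₀(z) = ∑ₖ (z/2)^{2k} / (k!)²`. -/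
noncomputable def besselI0 (z : ℝ) : ℝ := ∑' k : ℕ, (z/2)^(2*k) / ((k.factorial : ℝ))^2

/-!
Write `I₀ z = G (z²)` with the entire series `G u = ∑ uᵏ / (4ᵏ (k!)²)`, which satisfies
`4 u G'' + 4 G' = G`. Inside the cone `|x| < ct` the bracket defining `p` is then
`v = λ G(u) + 2λ² t G'(u)` with `u = λ²t² - (λ/c)²x²` a polynomial, and `p = e^{-λt} v / 2`.
This substitution turns `∂ₜ² + 2λ∂ₜ` into `∂ₜ² - λ²`, so the telegraph equation becomes the
Klein–Gordon equation `vₜₜ - c² vₓₓ = λ² v`. That one follows from Bessel's equation for `G`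
and its derivative, since `uₜ² - c² uₓ² = 4λ²u` and `uₜₜ - c² uₓₓ = 4λ²`.
-/

open Filter Topology

lemma iteratedDeriv_two_eq_of_hasDerivAt {𝕜 F : Type*} [NontriviallyNormedField 𝕜]
    [NormedAddCommGroup F] [NormedSpace 𝕜 F] {f f' : 𝕜 → F} {f'' : F} {x : 𝕜}
    (hf : ∀ y, HasDerivAt f (f' y) y) (hf' : HasDerivAt f' f'' x) :
    iteratedDeriv 2 f x = f'' := by
  rw [iteratedDeriv_succ, iteratedDeriv_one, funext fun y => (hf y).deriv]
  exact hf'.deriv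

def FactorialBounded (a : ℕ → ℝ) : Prop := ∀ k, |a k| ≤ 1 / (k.factorial : ℝ)

noncomputable def powerSum (a : ℕ → ℝ) (u : ℝ) : ℝ := ∑' k, a k * u ^ k

def derivCoeff (a : ℕ → ℝ) (k : ℕ) : ℝ := (k + 1) * a (k + 1)

namespace FactorialBounded

variable {a : ℕ → ℝ}

protected lemma derivCoeff (ha : FactorialBounded a) : FactorialBounded (derivCoeff a) := by
  intro k
  have hfac : ((k + 1).factorial : ℝ) = (k + 1) * k.factorial := by
    push_cast [Nat.factorial_succ]; ring
  calc |derivCoeff a k| = (k + 1) * |a (k + 1)| := by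
        rw [derivCoeff, abs_mul, abs_of_pos k.cast_add_one_pos]
    _ ≤ (k + 1) * (1 / ((k + 1).factorial : ℝ)) := by gcongr; exact ha (k + 1)
    _ = 1 / (k.factorial : ℝ) := by rw [hfac]; field_simp

lemma summable (ha : FactorialBounded a) (u : ℝ) : Summable fun k => a k * u ^ k := by
  refine .of_norm_bounded (Real.summable_pow_div_factorial |u|) fun k => ?_
  calc ‖a k * u ^ k‖ = |a k| * |u| ^ k := by
        rw [norm_mul, norm_pow, Real.norm_eq_abs, Real.norm_eq_abs]
    _ ≤ 1 / k.factorial * |u| ^ k := by gcongr; exact ha k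
    _ = |u| ^ k / k.factorial := by ring

lemma hasSum_derivCoeff (ha : FactorialBounded a) (u : ℝ) :
    HasSum (fun k => a k * (k * u ^ (k - 1))) (powerSum (derivCoeff a) u) := by
  have hshift : (fun k : ℕ => a (k + 1) * ((k + 1 : ℕ) * u ^ (k + 1 - 1)))
      = fun k => derivCoeff a k * u ^ k := by
    ext k
    simp only [derivCoeff, Nat.add_sub_cancel, Nat.cast_succ]
    ring
  rw [← hasSum_nat_add_iff' 1, hshift]
  simpa [powerSum] using (ha.derivCoeff.summable u).hasSum

lemma abs_mul_deriv_pow_le (ha : FactorialBounded a) {R y : ℝ} (hR : 1 ≤ R) (hy : |y| ≤ R)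
    (k : ℕ) : |a k * (k * y ^ (k - 1))| ≤ (2 * R) ^ k / k.factorial := by
  have hk : (k : ℝ) ≤ 2 ^ k := by exact_mod_cast k.lt_two_pow_self.le
  have hyk : |y| ^ (k - 1) ≤ R ^ k :=
    (pow_le_pow_left₀ (abs_nonneg y) hy _).trans (pow_le_pow_right₀ hR (Nat.sub_le k 1))
  calc |a k * (k * y ^ (k - 1))| = |a k| * (k * |y| ^ (k - 1)) := by
        rw [abs_mul, abs_mul, abs_pow, Nat.abs_cast]
    _ ≤ 1 / k.factorial * (2 ^ k * R ^ k) := by gcongr; exact ha k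
    _ = (2 * R) ^ k / k.factorial := by rw [mul_pow]; ring

lemma hasDerivAt_powerSum (ha : FactorialBounded a) (u : ℝ) :
    HasDerivAt (powerSum a) (powerSum (derivCoeff a) u) u := by
  have hR : 1 ≤ |u| + 1 := by linarith [abs_nonneg u]
  have hu : u ∈ Set.Ioo (-(|u| + 1)) (|u| + 1) := abs_lt.mp (by linarith)
  rw [← (ha.hasSum_derivCoeff u).tsum_eq]
  exact hasDerivAt_tsum_of_isPreconnected (Real.summable_pow_div_factorial (2 * (|u| + 1)))
    isOpen_Ioo isPreconnected_Ioo (fun k y _ => (hasDerivAt_pow k y).const_mul (a k))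
    (fun k y hy => ha.abs_mul_deriv_pow_le hR (abs_lt.mpr hy).le k) hu (ha.summable u) hu

lemma deriv_powerSum (ha : FactorialBounded a) :
    deriv (powerSum a) = powerSum (derivCoeff a) :=
  funext fun u => (ha.hasDerivAt_powerSum u).deriv

lemma contDiff_powerSum (ha : FactorialBounded a) (n : ℕ) : ContDiff ℝ n (powerSum a) := by
  induction n generalizing a with
  | zero =>
    exact contDiff_zero.mpr <| continuous_iff_continuousAt.mpr fun u =>
      (ha.hasDerivAt_powerSum u).continuousAt
  | succ n ih =>
    rw [Nat.cast_succ, contDiff_succ_iff_deriv, ha.deriv_powerSum]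
    exact ⟨fun u => (ha.hasDerivAt_powerSum u).differentiableAt, by simp, ih ha.derivCoeff⟩

lemma hasSum_natCast_mul_coeff (ha : FactorialBounded a) (u : ℝ) :
    HasSum (fun k => k * a k * u ^ k) (u * powerSum (derivCoeff a) u) := by
  have hshift : (fun k : ℕ => ((k + 1 : ℕ) : ℝ) * a (k + 1) * u ^ (k + 1))
      = fun k => u * (derivCoeff a k * u ^ k) := by
    ext k
    simp only [derivCoeff, Nat.cast_succ]
    ring
  rw [← hasSum_nat_add_iff' 1, hshift]
  simpa [powerSum, tsum_mul_left] using (ha.derivCoeff.summable u).hasSum.mul_left u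

lemma hasDerivAt_powerSum_quadratic (ha : FactorialBounded a) (α β s : ℝ) :
    HasDerivAt (fun s => powerSum a (α * s ^ 2 + β))
      (2 * α * s * powerSum (derivCoeff a) (α * s ^ 2 + β)) s := by
  have hq : HasDerivAt (fun s => α * s ^ 2 + β) (2 * α * s) s :=
    (((hasDerivAt_pow 2 s).const_mul α).add_const β).congr_deriv (by push_cast; ring)
  exact ((ha.hasDerivAt_powerSum _).comp s hq).congr_deriv (by ring)

lemma iteratedDeriv_two_powerSum_quadratic (ha : FactorialBounded a) (α β s : ℝ) :
    iteratedDeriv 2 (fun s => powerSum a (α * s ^ 2 + β)) s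
      = 2 * α * powerSum (derivCoeff a) (α * s ^ 2 + β)
        + 4 * α ^ 2 * s ^ 2 * powerSum (derivCoeff (derivCoeff a)) (α * s ^ 2 + β) :=
  iteratedDeriv_two_eq_of_hasDerivAt (ha.hasDerivAt_powerSum_quadratic α β)
    ((((hasDerivAt_id' s).const_mul (2 * α)).mul
      (ha.derivCoeff.hasDerivAt_powerSum_quadratic α β s)).congr_deriv (by ring))

lemma iteratedDeriv_two_mul_powerSum_quadratic (ha : FactorialBounded a) (α β s : ℝ) :
    iteratedDeriv 2 (fun s => s * powerSum a (α * s ^ 2 + β)) s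
      = 6 * α * s * powerSum (derivCoeff a) (α * s ^ 2 + β)
        + 4 * α ^ 2 * s ^ 3 * powerSum (derivCoeff (derivCoeff a)) (α * s ^ 2 + β) := by
  have hf (s : ℝ) : HasDerivAt (fun s => s * powerSum a (α * s ^ 2 + β))
      (powerSum a (α * s ^ 2 + β) + 2 * α * s ^ 2 * powerSum (derivCoeff a) (α * s ^ 2 + β)) s :=
    ((hasDerivAt_id' s).mul (ha.hasDerivAt_powerSum_quadratic α β s)).congr_deriv (by ring)
  refine iteratedDeriv_two_eq_of_hasDerivAt hf ?_
  exact ((ha.hasDerivAt_powerSum_quadratic α β s).add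
    (((hasDerivAt_pow 2 s).const_mul (2 * α)).mul
      (ha.derivCoeff.hasDerivAt_powerSum_quadratic α β s))).congr_deriv (by push_cast; ring)

end FactorialBounded

noncomputable def besselCoeff (k : ℕ) : ℝ := 1 / (4 ^ k * (k.factorial : ℝ) ^ 2)

lemma factorialBounded_besselCoeff : FactorialBounded besselCoeff := by
  intro k
  have hfac : (1 : ℝ) ≤ k.factorial := by exact_mod_cast k.factorial_pos
  rw [besselCoeff, abs_of_pos (by positivity)]
  gcongr
  nlinarith [one_le_pow₀ (by norm_num : (1 : ℝ) ≤ 4) (n := k)]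

lemma four_mul_succ_mul_derivCoeff_besselCoeff (k : ℕ) :
    4 * (k + 1) * derivCoeff besselCoeff k = besselCoeff k := by
  have hfac : ((k + 1).factorial : ℝ) = (k + 1) * k.factorial := by
    push_cast [Nat.factorial_succ]; ring
  simp only [derivCoeff, besselCoeff, hfac, pow_succ]
  field_simp

lemma besselI0_eq_powerSum (z : ℝ) : besselI0 z = powerSum besselCoeff (z ^ 2) := by
  refine tsum_congr fun k => ?_
  simp only [besselCoeff, pow_mul, div_pow]
  ring

/-- Bessel's equation `I₀'' + I₀'/z = I₀` in the variable `u = z²`. -/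
lemma powerSum_besselCoeff_ode (u : ℝ) :
    4 * u * powerSum (derivCoeff (derivCoeff besselCoeff)) u
      + 4 * powerSum (derivCoeff besselCoeff) u = powerSum besselCoeff u := by
  have hb := factorialBounded_besselCoeff.derivCoeff
  have h := ((hb.hasSum_natCast_mul_coeff u).mul_left 4).add ((hb.summable u).hasSum.mul_left 4)
  have hterm (k : ℕ) : 4 * (k * derivCoeff besselCoeff k * u ^ k)
      + 4 * (derivCoeff besselCoeff k * u ^ k) = besselCoeff k * u ^ k := by
    rw [← four_mul_succ_mul_derivCoeff_besselCoeff k]; ring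
  simp only [hterm] at h
  simp only [powerSum] at h ⊢
  linarith [h.tsum_eq]

lemma powerSum_besselCoeff_ode_deriv (u : ℝ) :
    4 * u * powerSum (derivCoeff (derivCoeff (derivCoeff besselCoeff))) u
      + 8 * powerSum (derivCoeff (derivCoeff besselCoeff)) u
      = powerSum (derivCoeff besselCoeff) u := by
  have hb := factorialBounded_besselCoeff
  have hode : HasDerivAt (powerSum besselCoeff)
      (4 * u * powerSum (derivCoeff (derivCoeff (derivCoeff besselCoeff))) u
        + 8 * powerSum (derivCoeff (derivCoeff besselCoeff)) u) u := by
    rw [show powerSum besselCoeff = fun v =>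
        4 * v * powerSum (derivCoeff (derivCoeff besselCoeff)) v
          + 4 * powerSum (derivCoeff besselCoeff) v
        from funext fun v => (powerSum_besselCoeff_ode v).symm]
    exact ((((hasDerivAt_id' u).const_mul 4).mul
      (hb.derivCoeff.derivCoeff.hasDerivAt_powerSum u)).add
      ((hb.derivCoeff.hasDerivAt_powerSum u).const_mul 4)).congr_deriv (by ring)
  exact hode.unique (hb.hasDerivAt_powerSum u)

lemma iteratedDeriv_two_exp_mul_add (lam : ℝ) {v : ℝ → ℝ} (hv : ContDiff ℝ 2 v) (t : ℝ) :
    iteratedDeriv 2 (fun s => exp (-(lam * s)) * v s) t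
        + 2 * lam * deriv (fun s => exp (-(lam * s)) * v s) t
      = exp (-(lam * t)) * (iteratedDeriv 2 v t - lam ^ 2 * v t) := by
  have hv' (s : ℝ) : HasDerivAt v (deriv v s) s :=
    (hv.differentiable (by norm_num) s).hasDerivAt
  have hv'' : HasDerivAt (deriv v) (iteratedDeriv 2 v t) t := by
    have hdiff := hv.differentiable_iteratedDeriv 1 (by norm_num)
    rw [iteratedDeriv_one] at hdiff
    rw [iteratedDeriv_succ, iteratedDeriv_one]
    exact (hdiff t).hasDerivAt
  have hexp (s : ℝ) : HasDerivAt (fun s => exp (-(lam * s))) (-lam * exp (-(lam * s))) s := by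
    simpa [mul_comm] using ((hasDerivAt_id' s).const_mul lam).neg.exp
  have hp' (s : ℝ) : HasDerivAt (fun s => exp (-(lam * s)) * v s)
      (exp (-(lam * s)) * (deriv v s - lam * v s)) s :=
    ((hexp s).mul (hv' s)).congr_deriv (by ring)
  have hp'' : HasDerivAt (fun s => exp (-(lam * s)) * (deriv v s - lam * v s))
      (exp (-(lam * t)) * (iteratedDeriv 2 v t - 2 * lam * deriv v t + lam ^ 2 * v t)) t :=
    ((hexp t).mul (hv''.sub ((hv' t).const_mul lam))).congr_deriv
      (by simp only [Pi.sub_apply]; ring)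
  rw [iteratedDeriv_two_eq_of_hasDerivAt hp' hp'', (hp' t).deriv]
  ring

/-- `(λ + ∂ₜ) I₀((λ/c)√(c²t² - x²))`, written through `I₀ z = G (z²)`, `G = powerSum besselCoeff`;
unlike the square root, this is smooth everywhere. -/
noncomputable def telegraphProfile (lam c x t : ℝ) : ℝ :=
  lam * powerSum besselCoeff (lam ^ 2 * t ^ 2 - (lam / c) ^ 2 * x ^ 2)
    + 2 * lam ^ 2 * t * powerSum (derivCoeff besselCoeff) (lam ^ 2 * t ^ 2 - (lam / c) ^ 2 * x ^ 2)

section Telegraph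

variable {lam c x t : ℝ}

lemma besselI0_mul_sqrt (hc : c ≠ 0) (h : 0 ≤ c ^ 2 * t ^ 2 - x ^ 2) :
    besselI0 (lam / c * √(c ^ 2 * t ^ 2 - x ^ 2))
      = powerSum besselCoeff (lam ^ 2 * t ^ 2 - (lam / c) ^ 2 * x ^ 2) := by
  rw [besselI0_eq_powerSum, mul_pow, sq_sqrt h]
  field_simp

lemma deriv_besselI0_mul_sqrt (hc : c ≠ 0) (h : 0 < c ^ 2 * t ^ 2 - x ^ 2) :
    deriv (fun τ => besselI0 (lam / c * √(c ^ 2 * τ ^ 2 - x ^ 2))) t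
      = 2 * lam ^ 2 * t
        * powerSum (derivCoeff besselCoeff) (lam ^ 2 * t ^ 2 - (lam / c) ^ 2 * x ^ 2) := by
  have hnear : ∀ᶠ τ in 𝓝 t, 0 < c ^ 2 * τ ^ 2 - x ^ 2 :=
    ((by fun_prop : Continuous fun τ => c ^ 2 * τ ^ 2 - x ^ 2).tendsto t).eventually_const_lt h
  have heq : (fun τ => besselI0 (lam / c * √(c ^ 2 * τ ^ 2 - x ^ 2)))
      =ᶠ[𝓝 t] fun τ =>
        powerSum besselCoeff (lam ^ 2 * τ ^ 2 + -((lam / c) ^ 2 * x ^ 2)) := by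
    filter_upwards [hnear] with τ hτ
    rw [besselI0_mul_sqrt hc hτ.le, sub_eq_add_neg]
  rw [heq.deriv_eq, (factorialBounded_besselCoeff.hasDerivAt_powerSum_quadratic _ _ t).deriv,
    sub_eq_add_neg]

lemma mul_besselI0_add_deriv_eq_telegraphProfile (hc : c ≠ 0) (h : 0 < c ^ 2 * t ^ 2 - x ^ 2) :
    lam * besselI0 (lam / c * √(c ^ 2 * t ^ 2 - x ^ 2))
        + deriv (fun τ => besselI0 (lam / c * √(c ^ 2 * τ ^ 2 - x ^ 2))) t
      = telegraphProfile lam c x t := by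
  rw [besselI0_mul_sqrt hc h.le, deriv_besselI0_mul_sqrt hc h, telegraphProfile]

lemma contDiff_telegraphProfile_time (lam c x : ℝ) :
    ContDiff ℝ 2 fun t => telegraphProfile lam c x t := by
  have h0 := factorialBounded_besselCoeff.contDiff_powerSum 2
  have h1 := factorialBounded_besselCoeff.derivCoeff.contDiff_powerSum 2
  unfold telegraphProfile
  fun_prop

lemma telegraphProfile_kleinGordon (lam : ℝ) (hc : c ≠ 0) (x t : ℝ) :
    iteratedDeriv 2 (fun s => telegraphProfile lam c x s) t
      = c ^ 2 * iteratedDeriv 2 (fun y => telegraphProfile lam c y t) x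
        + lam ^ 2 * telegraphProfile lam c x t := by
  have hb := factorialBounded_besselCoeff
  have h0 := hb.contDiff_powerSum 2
  have h1 := hb.derivCoeff.contDiff_powerSum 2
  set κ := lam / c with hκdef
  set u := lam ^ 2 * t ^ 2 - κ ^ 2 * x ^ 2 with hu
  have htime : (fun s => telegraphProfile lam c x s) = fun s =>
      lam * powerSum besselCoeff (lam ^ 2 * s ^ 2 + -(κ ^ 2 * x ^ 2))
        + 2 * lam ^ 2
          * (s * powerSum (derivCoeff besselCoeff) (lam ^ 2 * s ^ 2 + -(κ ^ 2 * x ^ 2))) := by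
    funext s
    simp only [telegraphProfile, sub_eq_add_neg]
    ring
  have hspace : (fun y => telegraphProfile lam c y t) = fun y =>
      lam * powerSum besselCoeff (-κ ^ 2 * y ^ 2 + lam ^ 2 * t ^ 2)
        + 2 * lam ^ 2 * t
          * powerSum (derivCoeff besselCoeff) (-κ ^ 2 * y ^ 2 + lam ^ 2 * t ^ 2) := by
    funext y
    rw [telegraphProfile,
      show lam ^ 2 * t ^ 2 - κ ^ 2 * y ^ 2 = -κ ^ 2 * y ^ 2 + lam ^ 2 * t ^ 2 by ring]
  rw [htime, hspace, iteratedDeriv_fun_add (by fun_prop) (by fun_prop),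
    iteratedDeriv_fun_add (by fun_prop) (by fun_prop)]
  simp only [iteratedDeriv_const_mul_field]
  rw [hb.iteratedDeriv_two_powerSum_quadratic,
    hb.derivCoeff.iteratedDeriv_two_mul_powerSum_quadratic, hb.iteratedDeriv_two_powerSum_quadratic,
    hb.derivCoeff.iteratedDeriv_two_powerSum_quadratic,
    show lam ^ 2 * t ^ 2 + -(κ ^ 2 * x ^ 2) = u by ring,
    show -κ ^ 2 * x ^ 2 + lam ^ 2 * t ^ 2 = u by ring, telegraphProfile, ← hκdef, ← hu]
  have hκ : κ ^ 2 * c ^ 2 = lam ^ 2 := by rw [hκdef]; field_simp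
  linear_combination lam ^ 3 * powerSum_besselCoeff_ode u
      + 2 * lam ^ 4 * t * powerSum_besselCoeff_ode_deriv u
    - (lam * (-2 * powerSum (derivCoeff besselCoeff) u
        + 4 * κ ^ 2 * x ^ 2 * powerSum (derivCoeff (derivCoeff besselCoeff)) u)
      + 2 * lam ^ 2 * t * (-2 * powerSum (derivCoeff (derivCoeff besselCoeff)) u
        + 4 * κ ^ 2 * x ^ 2 * powerSum (derivCoeff (derivCoeff (derivCoeff besselCoeff))) u)) * hκ

end Telegraph

theorem telegraph_ac_component_satisfies_telegraph_equation_general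
    (lam c : ℝ) (hc : 0 < c)
    (p : ℝ → ℝ → ℝ)
    (hp : ∀ x, ∀ t : ℝ, p x t = (Real.exp (-(lam*t)) / 2) *
      (lam * besselI0 ((lam/c) * Real.sqrt (c^2*t^2 - x^2))
        + deriv (fun τ => besselI0 ((lam/c) * Real.sqrt (c^2*τ^2 - x^2))) t)) :
    ∀ x t : ℝ, 0 < t → |x| < c*t →
      iteratedDeriv 2 (fun s => p x s) t + 2 * lam * deriv (fun s => p x s) t
        = c^2 * iteratedDeriv 2 (fun y => p y t) x := by
  intro x t _ hxt
  have hp_eq (y s : ℝ) (h : 0 < c ^ 2 * s ^ 2 - y ^ 2) :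
      p y s = exp (-(lam * s)) / 2 * telegraphProfile lam c y s := by
    rw [hp, mul_besselI0_add_deriv_eq_telegraphProfile hc.ne' h]
  have hreg : 0 < c ^ 2 * t ^ 2 - x ^ 2 := by nlinarith [abs_nonneg x, sq_abs x]
  have htime : (fun s => p x s)
      =ᶠ[𝓝 t] fun s => exp (-(lam * s)) * (telegraphProfile lam c x s / 2) := by
    filter_upwards [((by fun_prop : Continuous fun s => c ^ 2 * s ^ 2 - x ^ 2).tendsto t)
      |>.eventually_const_lt hreg] with s hs
    rw [hp_eq x s hs]
    ring
  have hspace : (fun y => p y t)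
      =ᶠ[𝓝 x] fun y => exp (-(lam * t)) / 2 * telegraphProfile lam c y t := by
    filter_upwards [((by fun_prop : Continuous fun y => c ^ 2 * t ^ 2 - y ^ 2).tendsto x)
      |>.eventually_const_lt hreg] with y hy
    exact hp_eq y t hy
  rw [htime.iteratedDeriv_eq, htime.deriv_eq, hspace.iteratedDeriv_eq,
    iteratedDeriv_two_exp_mul_add lam ((contDiff_telegraphProfile_time lam c x).div_const 2) t,
    iteratedDeriv_div_const, iteratedDeriv_const_mul_field,
    telegraphProfile_kleinGordon lam hc.ne' x t]
  ring

theorem telegraph_ac_component_satisfies_telegraph_equation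
    (lam c : ℝ) (hlam : 0 < lam) (hc : 0 < c)
    (p : ℝ → ℝ → ℝ)
    (hp : ∀ x, ∀ t : ℝ, p x t = (Real.exp (-(lam*t)) / 2) *
      (lam * besselI0 ((lam/c) * Real.sqrt (c^2*t^2 - x^2))
        + deriv (fun τ => besselI0 ((lam/c) * Real.sqrt (c^2*τ^2 - x^2))) t)) :
    ∀ x t : ℝ, 0 < t → |x| < c*t →
      iteratedDeriv 2 (fun s => p x s) t + 2 * lam * deriv (fun s => p x s) t
        = c^2 * iteratedDeriv 2 (fun y => p y t) x :=
  telegraph_ac_component_satisfies_telegraph_equation_general lam c hc p hp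
end

section
/- Let λ₁, λ₂ > 0, set B = (λ₁−λ₂)/(λ₁+λ₂), let c : ℝ → (0,∞) be continuous, and let Φ_c(x) = ∫₀^x dw/c(w). Suppose q : ℝ × ℝ → ℝ is twice continuously differentiable and satisfies the classical telegraph equation ∂²q/∂s² + (λ₁+λ₂) ∂q/∂s = ∂²q/∂y². Then the function p(x,t) = q( Φ_c(x) + Bt , B Φ_c(x) + t ), obtained through the Lorentz-type change of variables x′ = Φ_c(x) + Bt, t′ = B Φ_c(x) + t, satisfies the telegraph-type equation with space-varying velocity and drift: ∂²p/∂t² + (λ₁+λ₂) ∂p/∂t = c(x) ∂/∂x( c(x) ∂p/∂x ) + c(x)(λ₁−λ₂) ∂p/∂x. -/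
/-! In Lorentz coordinates `p(x, t) = q(Φ_c x • (1, B) + t • (B, 1))`, so `∂ₜ` is the directional
derivative of `q` along `(B, 1)` and, since `Φ_c' = 1 / c`, `c ∂ₓ` is the one along `(1, B)`.
Expanding these second-order operators bilinearly, the boosted telegraph operator
`∂²_{(B,1)} + (λ₁ + λ₂) ∂_{(B,1)} - ∂²_{(1,B)} - (λ₁ - λ₂) ∂_{(1,B)}` is `1 - B²` times the
classical one `∂ₛ² + (λ₁ + λ₂) ∂ₛ - ∂_y²`, because `λ₁ - λ₂ = B (λ₁ + λ₂)`. -/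

open Real MeasureTheory

section CurveCalculus

variable {E F : Type*} [NormedAddCommGroup E] [NormedSpace ℝ E]
  [NormedAddCommGroup F] [NormedSpace ℝ F] {f : E → F} {γ : ℝ → E}

theorem deriv_comp_of_hasDerivAt {u : E} {s : ℝ} (hf : DifferentiableAt ℝ f (γ s))
    (hγ : HasDerivAt γ u s) : deriv (fun s => f (γ s)) s = fderiv ℝ f (γ s) u :=
  (hf.hasFDerivAt.comp_hasDerivAt s hγ).deriv

theorem hasDerivAt_fderiv_apply_comp (hf : ContDiff ℝ 2 f) {w : E} {s : ℝ}
    (hγ : HasDerivAt γ w s) (v : E) :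
    HasDerivAt (fun s => fderiv ℝ f (γ s) v) (fderiv ℝ (fderiv ℝ f) (γ s) w v) s := by
  have hf' : Differentiable ℝ (fderiv ℝ f) :=
    (hf.fderiv_right (m := 1) le_rfl).differentiable one_ne_zero
  simpa using ((hf' (γ s)).hasFDerivAt.comp_hasDerivAt s hγ).clm_apply (hasDerivAt_const s v)

theorem iteratedDeriv_two_comp_of_hasDerivAt (hf : ContDiff ℝ 2 f) {u : E}
    (hγ : ∀ s, HasDerivAt γ u s) (s : ℝ) :
    iteratedDeriv 2 (fun s => f (γ s)) s = fderiv ℝ (fderiv ℝ f) (γ s) u u := by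
  have hderiv : deriv (fun s => f (γ s)) = fun s => fderiv ℝ f (γ s) u := funext fun s =>
    deriv_comp_of_hasDerivAt ((hf.differentiable two_ne_zero) (γ s)) (hγ s)
  rw [iteratedDeriv_succ, iteratedDeriv_one, hderiv]
  exact (hasDerivAt_fderiv_apply_comp hf (hγ s) u).deriv

variable {c : ℝ → ℝ} {v : E}

theorem smul_deriv_comp_of_hasDerivAt_inv_smul {y : ℝ} (hf : DifferentiableAt ℝ f (γ y))
    (hγ : HasDerivAt γ ((c y)⁻¹ • v) y) (hc : c y ≠ 0) :
    c y • deriv (fun z => f (γ z)) y = fderiv ℝ f (γ y) v := by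
  rw [deriv_comp_of_hasDerivAt hf hγ, map_smul, smul_inv_smul₀ hc]

theorem smul_deriv_smul_deriv_comp_of_hasDerivAt_inv_smul (hf : ContDiff ℝ 2 f)
    (hγ : ∀ y, HasDerivAt γ ((c y)⁻¹ • v) y) (hc : ∀ y, c y ≠ 0) (x : ℝ) :
    c x • deriv (fun y => c y • deriv (fun z => f (γ z)) y) x
      = fderiv ℝ (fderiv ℝ f) (γ x) v v := by
  have hinner : (fun y => c y • deriv (fun z => f (γ z)) y) = fun y => fderiv ℝ f (γ y) v :=
    funext fun y => smul_deriv_comp_of_hasDerivAt_inv_smul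
      ((hf.differentiable two_ne_zero) (γ y)) (hγ y) (hc y)
  rw [hinner, (hasDerivAt_fderiv_apply_comp hf (hγ x) v).deriv, map_smul,
    smul_apply, smul_inv_smul₀ (hc x)]

end CurveCalculus

theorem boost_telegraph_symbol (L : ℝ × ℝ →L[ℝ] ℝ × ℝ →L[ℝ] ℝ) (ℓ : ℝ × ℝ →L[ℝ] ℝ)
    (Λ B : ℝ) :
    L (B, 1) (B, 1) + Λ * ℓ (B, 1) - (L (1, B) (1, B) + B * Λ * ℓ (1, B))
      = (1 - B ^ 2) * (L (0, 1) (0, 1) + Λ * ℓ (0, 1) - L (1, 0) (1, 0)) := by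
  have hbasis : ∀ a b : ℝ, ((a, b) : ℝ × ℝ) = a • (1, 0) + b • (0, 1) := by simp
  rw [hbasis B 1, hbasis 1 B]
  simp only [map_add, map_smul, add_apply, smul_apply, smul_eq_mul]
  ring

def lorentz (B x t : ℝ) : ℝ × ℝ := (x + B * t, B * x + t)

theorem hasDerivAt_lorentz_time (B x t : ℝ) : HasDerivAt (fun t => lorentz B x t) (B, 1) t := by
  simpa [lorentz] using ((hasDerivAt_id t).const_mul B |>.const_add x).prodMk
    ((hasDerivAt_id t).const_add (B * x))

theorem hasDerivAt_lorentz_space (B x t : ℝ) :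
    HasDerivAt (fun x => lorentz B x t) (1, B) x := by
  simpa [lorentz] using ((hasDerivAt_id x).add_const (B * t)).prodMk
    ((hasDerivAt_id x).const_mul B |>.add_const t)

theorem telegraph_fderiv_of_iteratedDeriv {f : ℝ × ℝ → ℝ} {Λ : ℝ} (hf : ContDiff ℝ 2 f)
    (heq : ∀ y s : ℝ, iteratedDeriv 2 (fun σ => f (y, σ)) s + Λ * deriv (fun σ => f (y, σ)) s
        = iteratedDeriv 2 (fun z => f (z, s)) y) (z : ℝ × ℝ) :
    fderiv ℝ (fderiv ℝ f) z (0, 1) (0, 1) + Λ * fderiv ℝ f z (0, 1)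
      = fderiv ℝ (fderiv ℝ f) z (1, 0) (1, 0) := by
  have hs : ∀ σ, HasDerivAt (fun σ : ℝ => (z.1, σ)) (0, 1) σ :=
    fun σ => (hasDerivAt_const σ z.1).prodMk (hasDerivAt_id σ)
  have hy : ∀ y, HasDerivAt (fun y : ℝ => (y, z.2)) (1, 0) y :=
    fun y => (hasDerivAt_id y).prodMk (hasDerivAt_const y z.2)
  have := heq z.1 z.2
  rwa [iteratedDeriv_two_comp_of_hasDerivAt hf hs, iteratedDeriv_two_comp_of_hasDerivAt hf hy,
    deriv_comp_of_hasDerivAt ((hf.differentiable two_ne_zero) _) (hs z.2)] at this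

theorem telegraph_with_drift_via_Lorentz_transformation
    (lam₁ lam₂ : ℝ) (hlam₁ : 0 < lam₁) (hlam₂ : 0 < lam₂)
    (B : ℝ) (hB : B = (lam₁ - lam₂) / (lam₁ + lam₂))
    (c : ℝ → ℝ) (hc : Continuous c) (hcpos : ∀ x, 0 < c x)
    (q : ℝ → ℝ → ℝ)
    (hq : ContDiff ℝ 2 (fun z : ℝ × ℝ => q z.1 z.2))
    (heq : ∀ y s : ℝ,
      iteratedDeriv 2 (fun σ => q y σ) s + (lam₁ + lam₂) * deriv (fun σ => q y σ) s
        = iteratedDeriv 2 (fun z => q z s) y)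
    (p : ℝ → ℝ → ℝ)
    (hp : ∀ x t : ℝ, p x t = q (Phi c x + B * t) (B * Phi c x + t)) :
    ∀ x t : ℝ,
      iteratedDeriv 2 (fun s => p x s) t + (lam₁ + lam₂) * deriv (fun s => p x s) t
        = c x * deriv (fun y => c y * deriv (fun z => p z t) y) x
          + c x * (lam₁ - lam₂) * deriv (fun y => p y t) x := by
  intro x t
  set f : ℝ × ℝ → ℝ := fun z => q z.1 z.2
  have hc0 : ∀ y, c y ≠ 0 := fun y => (hcpos y).ne'
  have hdrift : lam₁ - lam₂ = B * (lam₁ + lam₂) := by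
    rw [hB, div_mul_cancel₀ _ (by positivity)]
  have htime := hasDerivAt_lorentz_time B (Phi c x)
  have hspace : ∀ y, HasDerivAt (fun y => lorentz B (Phi c y) t) ((c y)⁻¹ • (1, B)) y :=
    fun y => (hasDerivAt_lorentz_space B (Phi c y) t).scomp y (hasDerivAt_Phi hc hc0 y)
  have hpt : (fun s => p x s) = fun s => f (lorentz B (Phi c x) s) := funext (hp x)
  have hpx : (fun y => p y t) = fun y => f (lorentz B (Phi c y) t) := funext (hp · t)
  have hf : Differentiable ℝ f := hq.differentiable two_ne_zero
  have hspace₁ := smul_deriv_comp_of_hasDerivAt_inv_smul (hf _) (hspace x) (hc0 x)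
  have hspace₂ := smul_deriv_smul_deriv_comp_of_hasDerivAt_inv_smul hq hspace hc0 x
  simp only [smul_eq_mul] at hspace₁ hspace₂
  rw [hpt, hpx, mul_right_comm, iteratedDeriv_two_comp_of_hasDerivAt hq htime,
    deriv_comp_of_hasDerivAt (hf _) (htime t), hspace₁, hspace₂, hdrift]
  linear_combination (boost_telegraph_symbol (fderiv ℝ (fderiv ℝ f) _) (fderiv ℝ f _)
    (lam₁ + lam₂) B) + (1 - B ^ 2) * telegraph_fderiv_of_iteratedDeriv hq heq (lorentz B (Phi c x) t)
end

section
/- Let λ : (0,∞) → ℝ be continuously differentiable, let c > 0, and let Λ(t) = ∫₀^t λ(s) ds (assumed finite for all t > 0). If v : ℝ × (0,∞) → ℝ is twice continuously differentiable and satisfies the Klein–Gordon-type equation ∂²v/∂t² − (λ′(t) + λ(t)²) v = c² ∂²v/∂x², then p(x,t) = e^{−Λ(t)} v(x,t) satisfies the non-homogeneous telegraph equation ∂²p/∂t² + 2λ(t) ∂p/∂t = c² ∂²p/∂x² for all x ∈ ℝ and t > 0. -/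
open Real MeasureTheory Filter Topology

/-!
Writing `p = e^{-Λ} v` with `Λ' = λ`, one finds `∂ₜp = e^{-Λ} (∂ₜv - λ v)` and
`∂ₜ²p = e^{-Λ} (∂ₜ²v - 2λ ∂ₜv + (λ² - λ') v)`, so that
`∂ₜ²p + 2λ ∂ₜp = e^{-Λ} (∂ₜ²v - (λ' + λ²) v)`: the damping term of the telegraph equation is
absorbed into the potential of the Klein–Gordon equation. The spatial derivatives do not see the
factor `e^{-Λ(t)}`, and `Λ' = λ` is the fundamental theorem of calculus, `λ` being continuous.
-/

theorem ContinuousOn.integral_hasDerivAt_right {E : Type*} [NormedAddCommGroup E]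
    [NormedSpace ℝ E] [CompleteSpace E] {f : ℝ → E} {U : Set ℝ} {a b : ℝ} (hf : ContinuousOn f U)
    (hU : IsOpen U) (hb : b ∈ U) (hint : IntervalIntegrable f volume a b) :
    HasDerivAt (fun u => ∫ x in a..u, f x) (f b) b :=
  intervalIntegral.integral_hasDerivAt_right hint (hf.stronglyMeasurableAtFilter hU b hb)
    (hf.continuousAt (hU.mem_nhds hb))

theorem ContDiffAt.hasDerivAt_deriv {𝕜 E : Type*} [NontriviallyNormedField 𝕜]
    [NormedAddCommGroup E] [NormedSpace 𝕜 E] {f : 𝕜 → E} {t : 𝕜} (hf : ContDiffAt 𝕜 2 f t) :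
    HasDerivAt (deriv f) (iteratedDeriv 2 f t) t := by
  have hf' : ContDiffAt 𝕜 1 (deriv f) t :=
    (hf.fderiv_right (m := 1) le_rfl).clm_apply contDiffAt_const
  rw [iteratedDeriv_succ', iteratedDeriv_one]
  exact (hf'.differentiableAt one_ne_zero).hasDerivAt

section ExpNegMul

variable {Λ lam F : ℝ → ℝ} {t l F' : ℝ}

theorem hasDerivAt_exp_neg_mul (hΛ : HasDerivAt Λ l t) (hF : HasDerivAt F F' t) :
    HasDerivAt (fun s => exp (-Λ s) * F s) (exp (-Λ t) * (F' - l * F t)) t :=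
  (hΛ.neg.exp.mul hF).congr_deriv (by rw [Pi.neg_apply]; ring)

theorem iteratedDeriv_two_exp_neg_mul_add (hΛ : ∀ᶠ s in 𝓝 t, HasDerivAt Λ (lam s) s)
    (hlam : DifferentiableAt ℝ lam t) (hF : ContDiffAt ℝ 2 F t) :
    iteratedDeriv 2 (fun s => exp (-Λ s) * F s) t
        + 2 * lam t * deriv (fun s => exp (-Λ s) * F s) t
      = exp (-Λ t) * (iteratedDeriv 2 F t - (deriv lam t + lam t ^ 2) * F t) := by
  have hF₁ : ∀ᶠ s in 𝓝 t, HasDerivAt F (deriv F s) s :=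
    (hF.eventually (by simp)).mono fun s hs => (hs.differentiableAt two_ne_zero).hasDerivAt
  have hP₁ : deriv (fun s => exp (-Λ s) * F s)
      =ᶠ[𝓝 t] fun s => exp (-Λ s) * (deriv F s - lam s * F s) :=
    (hΛ.and hF₁).mono fun s hs => (hasDerivAt_exp_neg_mul hs.1 hs.2).deriv
  have hP₂ : HasDerivAt (fun s => exp (-Λ s) * (deriv F s - lam s * F s)) _ t :=
    hasDerivAt_exp_neg_mul hΛ.self_of_nhds
      (hF.hasDerivAt_deriv.sub (hlam.hasDerivAt.mul hF₁.self_of_nhds))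
  rw [iteratedDeriv_succ', iteratedDeriv_one, hP₁.deriv_eq, hP₂.deriv, hP₁.eq_of_nhds]
  ring

end ExpNegMul

theorem nonhomogeneous_telegraph_from_Klein_Gordon_general
    (lam : ℝ → ℝ) (hlam : ContDiffOn ℝ 1 lam (Set.Ioi (0:ℝ)))
    (c : ℝ)
    (hint : ∀ t : ℝ, 0 < t → IntervalIntegrable lam volume 0 t)
    (Λ : ℝ → ℝ) (hΛ : ∀ t : ℝ, Λ t = ∫ s in (0:ℝ)..t, lam s)
    (v : ℝ → ℝ → ℝ)
    (hv : ContDiffOn ℝ 2 (fun z : ℝ × ℝ => v z.1 z.2) (Set.univ ×ˢ Set.Ioi (0:ℝ)))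
    (heq : ∀ x : ℝ, ∀ t : ℝ, 0 < t →
      iteratedDeriv 2 (fun s => v x s) t - (deriv lam t + (lam t)^2) * v x t
        = c^2 * iteratedDeriv 2 (fun y => v y t) x)
    (p : ℝ → ℝ → ℝ)
    (hp : ∀ x t : ℝ, p x t = Real.exp (-(Λ t)) * v x t) :
    ∀ x : ℝ, ∀ t : ℝ, 0 < t →
      iteratedDeriv 2 (fun s => p x s) t + 2 * lam t * deriv (fun s => p x s) t
        = c^2 * iteratedDeriv 2 (fun y => p y t) x := by
  intro x t ht
  have hΛ' : ∀ᶠ s in 𝓝 t, HasDerivAt Λ (lam s) s := by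
    filter_upwards [isOpen_Ioi.mem_nhds ht] with s hs
    rw [funext hΛ]
    exact hlam.continuousOn.integral_hasDerivAt_right isOpen_Ioi hs (hint s hs)
  have hlam_t : DifferentiableAt ℝ lam t :=
    (hlam.contDiffAt (isOpen_Ioi.mem_nhds ht)).differentiableAt one_ne_zero
  have hv_t : ContDiffAt ℝ 2 (fun s => v x s) t :=
    (hv.contDiffAt ((isOpen_univ.prod isOpen_Ioi).mem_nhds (Set.mk_mem_prod trivial ht))).comp t
      (contDiffAt_const.prodMk contDiffAt_id)
  simp only [hp]
  rw [iteratedDeriv_two_exp_neg_mul_add hΛ' hlam_t hv_t, iteratedDeriv_const_mul_field,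
    heq x t ht]
  ring

theorem nonhomogeneous_telegraph_from_Klein_Gordon
    (lam : ℝ → ℝ) (hlam : ContDiffOn ℝ 1 lam (Set.Ioi (0:ℝ)))
    (c : ℝ) (hc : 0 < c)
    (hint : ∀ t : ℝ, 0 < t → IntervalIntegrable lam volume 0 t)
    (Λ : ℝ → ℝ) (hΛ : ∀ t : ℝ, Λ t = ∫ s in (0:ℝ)..t, lam s)
    (v : ℝ → ℝ → ℝ)
    (hv : ContDiffOn ℝ 2 (fun z : ℝ × ℝ => v z.1 z.2) (Set.univ ×ˢ Set.Ioi (0:ℝ)))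
    (heq : ∀ x : ℝ, ∀ t : ℝ, 0 < t →
      iteratedDeriv 2 (fun s => v x s) t - (deriv lam t + (lam t)^2) * v x t
        = c^2 * iteratedDeriv 2 (fun y => v y t) x)
    (p : ℝ → ℝ → ℝ)
    (hp : ∀ x t : ℝ, p x t = Real.exp (-(Λ t)) * v x t) :
    ∀ x : ℝ, ∀ t : ℝ, 0 < t →
      iteratedDeriv 2 (fun s => p x s) t + 2 * lam t * deriv (fun s => p x s) t
        = c^2 * iteratedDeriv 2 (fun y => p y t) x :=
  nonhomogeneous_telegraph_from_Klein_Gordon_general lam hlam c hint Λ hΛ v hv heq p hp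
end

section
/- Let λ > 0, c > 0 and t > 0. Then ∫_{−ct}^{ct} λ I₀( (λ/c)√(c²t² − x²) ) / (2c sinh(λt)) dx = 1; equivalently, ∫_{−t}^{t} I₀( λ√(t² − y²) ) dy = (2/λ) sinh(λt). Hence x ↦ λ I₀((λ/c)√(c²t²−x²))/(2c sinh(λt)) is a probability density on (−ct, ct), and the process X(t) has a purely absolutely continuous distribution. -/
/-!
Expanding `I₀(λ√(t² - y²)) = ∑ₖ (λ/2)^(2k) (t² - y²)^k / (k!)²`, each term integrates, via
`y = t cos θ` and Wallis' formula, to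
`∫_{-t}^{t} (t² - y²)^k dy = 2^(2k+1) (k!)² t^(2k+1) / (2k+1)!`.
The `(k!)²` cancels, leaving `(2/λ) ∑ₖ (λt)^(2k+1) / (2k+1)! = (2/λ) sinh(λt)`; the terms are
nonnegative, so summation and integration commute. The substitution `x = c y` gives the
normalisation of the density.
-/

open Real MeasureTheory

open Finset intervalIntegral

lemma besselI0_nonneg (z : ℝ) : 0 ≤ besselI0 z :=
  tsum_nonneg fun k => div_nonneg ((even_two_mul k).pow_nonneg _) (sq_nonneg _)

lemma besselI0_mul_sqrt_s12 (a : ℝ) {s : ℝ} (hs : 0 ≤ s) :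
    besselI0 (a * √s) = ∑' k : ℕ, (a / 2) ^ (2 * k) / (k.factorial : ℝ) ^ 2 * s ^ k := by
  refine tsum_congr fun k => ?_
  rw [mul_div_right_comm, mul_pow, pow_mul (√s), sq_sqrt hs]
  ring

lemma prod_two_mul_add_two_div_two_mul_add_three (n : ℕ) :
    ∏ i ∈ range n, (2 * (i : ℝ) + 2) / (2 * i + 3)
      = 2 ^ (2 * n) * (n.factorial : ℝ) ^ 2 / (2 * n + 1).factorial := by
  induction n with
  | zero => simp
  | succ n ih =>
    rw [prod_range_succ, ih, show 2 * (n + 1) + 1 = (2 * n + 1) + 1 + 1 by ring]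
    simp only [Nat.factorial_succ]
    push_cast
    field_simp
    ring

lemma integral_one_sub_sq_pow (k : ℕ) :
    ∫ x in (-1 : ℝ)..1, (1 - x ^ 2) ^ k
      = 2 ^ (2 * k + 1) * (k.factorial : ℝ) ^ 2 / (2 * k + 1).factorial := by
  -- `u = cos θ` turns this into the Wallis integral `∫₀^π sin^(2k+1) θ dθ`
  have h := integral_sin_pow_odd_mul_cos_pow (a := 0) (b := π) k 0
  simp only [pow_zero, mul_one, one_mul, cos_zero, cos_pi] at h
  rw [← h, integral_sin_pow_odd, prod_two_mul_add_two_div_two_mul_add_three]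
  ring

lemma integral_sq_sub_sq_pow (t : ℝ) (k : ℕ) :
    ∫ y in (-t)..t, (t ^ 2 - y ^ 2) ^ k
      = 2 ^ (2 * k + 1) * (k.factorial : ℝ) ^ 2 / (2 * k + 1).factorial * t ^ (2 * k + 1) := by
  rcases eq_or_ne t 0 with rfl | ht
  · simp
  have h := integral_comp_mul_left (fun y => (t ^ 2 - y ^ 2) ^ k) ht (a := -1) (b := 1)
  simp only [mul_neg, mul_one, mul_pow, ← mul_one_sub, smul_eq_mul] at h
  rw [intervalIntegral.integral_const_mul, integral_one_sub_sq_pow] at h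
  rw [← mul_inv_cancel_left₀ ht (∫ y in (-t)..t, _), ← h]
  ring

lemma hasSum_intervalIntegral_of_nonneg {ι : Type*} [Countable ι] {F : ι → ℝ → ℝ}
    {a b : ℝ} (hab : a ≤ b) (hF_int : ∀ i, IntervalIntegrable (F i) volume a b)
    (hF_nonneg : ∀ i, ∀ x ∈ Set.Ioc a b, 0 ≤ F i x)
    (hF_sum : Summable fun i => ∫ x in a..b, F i x) :
    HasSum (fun i => ∫ x in a..b, F i x) (∫ x in a..b, ∑' i, F i x) := by
  simp only [integral_of_le hab] at hF_sum ⊢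
  refine hasSum_integral_of_summable_integral_norm (fun i => (hF_int i).1) ?_
  refine hF_sum.congr fun i => setIntegral_congr_fun measurableSet_Ioc fun x hx => ?_
  exact (norm_of_nonneg (hF_nonneg i x hx)).symm

theorem integral_besselI0_mul_sqrt_sq_sub_sq {lam t : ℝ} (hlam : lam ≠ 0) (ht : 0 ≤ t) :
    ∫ y in (-t)..t, besselI0 (lam * √(t ^ 2 - y ^ 2)) = 2 / lam * sinh (lam * t) := by
  set F : ℕ → ℝ → ℝ := fun k y =>
    (lam / 2) ^ (2 * k) / (k.factorial : ℝ) ^ 2 * (t ^ 2 - y ^ 2) ^ k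
  have hsq_nonneg : ∀ y ∈ Set.Icc (-t) t, 0 ≤ t ^ 2 - y ^ 2 := fun y hy =>
    sub_nonneg.2 (sq_le_sq' hy.1 hy.2)
  have hterm : ∀ k : ℕ,
      ∫ y in (-t)..t, F k y = 2 / lam * ((lam * t) ^ (2 * k + 1) / (2 * k + 1).factorial) := by
    intro k
    simp only [F, intervalIntegral.integral_const_mul, integral_sq_sub_sq_pow, div_pow]
    field_simp
    ring
  have hsinh : HasSum (fun k => ∫ y in (-t)..t, F k y) (2 / lam * sinh (lam * t)) := by
    simpa only [hterm] using (hasSum_sinh (lam * t)).mul_left (2 / lam)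
  have hswap := hasSum_intervalIntegral_of_nonneg (neg_le_self ht)
    (fun k => (by fun_prop : Continuous (F k)).intervalIntegrable _ _)
    (fun k y hy => mul_nonneg (div_nonneg ((even_two_mul k).pow_nonneg _) (sq_nonneg _))
      (pow_nonneg (hsq_nonneg y (Set.Ioc_subset_Icc_self hy)) k))
    hsinh.summable
  rw [← hswap.unique hsinh]
  refine integral_congr fun y hy => ?_
  rw [Set.uIcc_of_le (neg_le_self ht)] at hy
  exact besselI0_mul_sqrt_s12 lam (hsq_nonneg y hy)

lemma integral_besselI0_div_mul_sqrt (lam : ℝ) {c : ℝ} (hc : 0 < c) (t : ℝ) :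
    ∫ x in (-(c * t))..(c * t), besselI0 ((lam / c) * √(c ^ 2 * t ^ 2 - x ^ 2))
      = c * ∫ y in (-t)..t, besselI0 (lam * √(t ^ 2 - y ^ 2)) := by
  have h := integral_comp_mul_left (fun x => besselI0 ((lam / c) * √(c ^ 2 * t ^ 2 - x ^ 2)))
    hc.ne' (a := -t) (b := t)
  have hpt : ∀ y, (lam / c) * √(c ^ 2 * t ^ 2 - (c * y) ^ 2) = lam * √(t ^ 2 - y ^ 2) := by
    intro y
    rw [show c ^ 2 * t ^ 2 - (c * y) ^ 2 = c ^ 2 * (t ^ 2 - y ^ 2) by ring,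
      sqrt_mul (sq_nonneg c), sqrt_sq hc.le]
    field_simp
  simp only [hpt, mul_neg, smul_eq_mul] at h
  rw [h, mul_inv_cancel_left₀ hc.ne']

theorem telegraph_coth_rate_density_normalization
    (lam c t : ℝ) (hlam : 0 < lam) (hc : 0 < c) (ht : 0 < t) :
    (∫ x in (-(c*t))..(c*t),
        lam * besselI0 ((lam/c) * Real.sqrt (c^2*t^2 - x^2))
          / (2 * c * Real.sinh (lam * t)) = 1) ∧
    (∫ y in (-t)..t, besselI0 (lam * Real.sqrt (t^2 - y^2))
        = (2/lam) * Real.sinh (lam * t)) ∧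
    (∀ x ∈ Set.Ioo (-(c*t)) (c*t),
      0 ≤ lam * besselI0 ((lam/c) * Real.sqrt (c^2*t^2 - x^2))
            / (2 * c * Real.sinh (lam * t))) := by
  have hsinh : 0 < sinh (lam * t) := sinh_pos_iff.2 (mul_pos hlam ht)
  have hint := integral_besselI0_mul_sqrt_sq_sub_sq hlam.ne' ht.le
  refine ⟨?_, hint, fun x _ => ?_⟩
  · rw [intervalIntegral.integral_div, intervalIntegral.integral_const_mul,
      integral_besselI0_div_mul_sqrt lam hc, hint]
    field_simp
  · exact div_nonneg (mul_nonneg hlam.le (besselI0_nonneg _)) (by positivity)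
end
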